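/- Let B be a ring and M a quasi-Armendariz right B-module. Then M satisfies the ascending chain condition on annihilators of submodules if and only if the polynomial module M[x] over B[x] satisfies the ascending chain condition on annihilators of its submodules. -/

import Mathlib

/-!
Write `A[x]` for the polynomials with all coefficients in `A`. For a submodule `X` of `M`,
`ann(X[x]) = ann(X)[x]` (test against constants `m ∈ X`). Conversely, for a submodule `U` of
`M[x]`, let `C` be the submodule of `M` generated by the coefficients of elements of `U`; if
`f ∈ ann(U)` then `p B[x] f = 0` for every `p ∈ U`, and quasi-Armendariz gives `C f_j = 0`,
so `ann(U) = ann(C)[x]`. Hence `A ↦ A[x]` maps the annihilators of `M` onto those of `M[x]`,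
and since it is an order embedding on sets containing `0`, ascending chains of annihilators on
the two sides correspond.
-/

open Polynomial MulOpposite

/-- The polynomial module `M[x]` over `Bᵐᵒᵖ[X]`, for a right `B`-module `M`
(encoded as a left `Bᵐᵒᵖ`-module). -/
noncomputable def polyModAux (B : Type*) [Ring B] (M : Type*) [AddCommGroup M]
    [Module Bᵐᵒᵖ M] : Module (Polynomial Bᵐᵒᵖ) (ℕ →₀ M) :=
  Module.compHom _
    (Polynomial.eval₂RingHom' (Module.toAddMonoidEnd Bᵐᵒᵖ (ℕ →₀ M))
      (Finsupp.mapDomain.addMonoidHom Nat.succ : AddMonoid.End (ℕ →₀ M))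
      (fun a => AddMonoidHom.ext fun p => (Finsupp.mapDomain_smul a p).symm))

/-- `M[x]` as a right `B[x]`-module, i.e. a left module over `(B[x])ᵐᵒᵖ`. -/
noncomputable def polyModOp (B : Type*) [Ring B] (M : Type*) [AddCommGroup M]
    [Module Bᵐᵒᵖ M] : Module (Polynomial B)ᵐᵒᵖ (ℕ →₀ M) :=
  letI := polyModAux B M
  Module.compHom _ (Polynomial.opRingEquiv B).toRingHom

/-- The right action `m(x) · f(x)` of `B[x]` on the polynomial module `M[x]`. -/
noncomputable def rsmul (B : Type*) [Ring B] (M : Type*) [AddCommGroup M]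
    [Module Bᵐᵒᵖ M] (p : ℕ →₀ M) (f : Polynomial B) : ℕ →₀ M := by
  letI := polyModOp B M
  exact op f • p

/-- The annihilator in `S` of a subset `X` of a right `S`-module `N`:
`ann_S(X) = {r : S | Xr = 0}`. -/
def rAnn (S : Type*) [Ring S] {N : Type*} [AddCommGroup N] [Module Sᵐᵒᵖ N]
    (X : Set N) : Set S :=
  {r : S | ∀ x ∈ X, op r • x = 0}

/-- `C` is the right ideal `eS` generated by an idempotent `e` of `S`. -/
def IsIdempotentGenerated (S : Type*) [Ring S] (C : Set S) : Prop :=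
  ∃ e : S, e * e = e ∧ C = {x : S | ∃ b : S, x = e * b}

/-- A right `B`-module `M` is quasi-Armendariz if `m(x) B[x] f(x) = 0` implies
`m_i B b_j = 0` for all coefficients `m_i` of `m(x)` and `b_j` of `f(x)`. -/
def RQuasiArmendariz (B : Type*) [Ring B] (M : Type*) [AddCommGroup M]
    [Module Bᵐᵒᵖ M] : Prop :=
  ∀ (p : ℕ →₀ M) (f : Polynomial B),
    (∀ h : Polynomial B, rsmul B M p (h * f) = 0) →
      ∀ (i j : ℕ) (r : B), op (f.coeff j) • (op r • p i) = 0

/-- A right `S`-module `N` satisfies the ascending chain condition on annihilators of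
submodules. -/
def AccAnnSub (S : Type*) [Ring S] (N : Type*) [AddCommGroup N] [Module Sᵐᵒᵖ N] : Prop :=
  ∀ c : ℕ → Set S, (∀ n, ∃ X : Submodule Sᵐᵒᵖ N, c n = rAnn S (X : Set N)) →
    (∀ n, c n ⊆ c (n + 1)) → ∃ n, ∀ k, n ≤ k → c k = c n

theorem Finsupp.mapDomain.addMonoidHom_iterate_apply {α M : Type*} [AddCommMonoid M]
    (f : α → α) (j : ℕ) (p : α →₀ M) :
    (Finsupp.mapDomain.addMonoidHom f : AddMonoid.End (α →₀ M))^[j] p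
      = Finsupp.mapDomain f^[j] p := by
  induction j with
  | zero => simp [Finsupp.mapDomain_id]
  | succ n ih =>
    rw [Function.iterate_succ_apply', ih, Finsupp.mapDomain.addMonoidHom_apply,
      ← Finsupp.mapDomain_comp, ← Function.iterate_succ']

def ChainStabilizes {α : Type*} [Preorder α] (F : Set α) : Prop :=
  ∀ c : ℕ → α, (∀ n, c n ∈ F) → (∀ n, c n ≤ c (n + 1)) → ∃ n, ∀ k, n ≤ k → c k = c n

theorem chainStabilizes_iff_of_image_eq {α β : Type*} [PartialOrder α] [Preorder β]
    {F : Set α} {G : Set β} (φ : α → β) (hφ : ∀ a ∈ F, ∀ b ∈ F, φ a ≤ φ b ↔ a ≤ b)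
    (hG : φ '' F = G) : ChainStabilizes F ↔ ChainStabilizes G := by
  subst hG
  constructor
  · intro hF c hc hmono
    choose a haF hac using hc
    obtain ⟨n, hn⟩ := hF a haF fun k => (hφ _ (haF k) _ (haF (k + 1))).1 <| by
      rw [hac, hac]; exact hmono k
    exact ⟨n, fun k hk => by rw [← hac, ← hac, hn k hk]⟩
  · intro hG a haF hmono
    obtain ⟨n, hn⟩ := hG (φ ∘ a) (fun k => ⟨a k, haF k, rfl⟩)
      fun k => (hφ _ (haF k) _ (haF (k + 1))).2 (hmono k)
    refine ⟨n, fun k hk => le_antisymm ?_ ?_⟩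
    · exact (hφ _ (haF k) _ (haF n)).1 (hn k hk).le
    · exact (hφ _ (haF n) _ (haF k)).1 (hn k hk).ge

section Annihilator

variable {S : Type*} [Ring S] {N : Type*} [AddCommGroup N] [Module Sᵐᵒᵖ N]

theorem zero_mem_rAnn (X : Set N) : (0 : S) ∈ rAnn S X := fun x _ => by
  rw [op_zero, zero_smul]

/-- The factor `r` is needed because the span of `X` is `X S`, not `X`. -/
theorem mem_rAnn_span_iff (X : Set N) (b : S) :
    b ∈ rAnn S (Submodule.span Sᵐᵒᵖ X : Set N) ↔ ∀ x ∈ X, ∀ r : S, op b • op r • x = 0 := by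
  refine ⟨fun hb x hx r => hb _ (Submodule.smul_mem _ _ (Submodule.subset_span hx)),
    fun h y hy => ?_⟩
  suffices ∀ r : S, op b • op r • y = 0 by simpa using this 1
  induction hy using Submodule.span_induction with
  | mem x hx => exact h x hx
  | zero => simp
  | add y z _ _ hy hz => intro r; rw [smul_add, smul_add, hy, hz, add_zero]
  | smul c y _ hy =>
    intro r
    rw [smul_smul (op r) c, ← op_unop c, ← op_mul]
    exact hy _

variable (S N) in
def annihilators : Set (Set S) :=
  Set.range fun X : Submodule Sᵐᵒᵖ N => rAnn S (X : Set N)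

variable (S N) in
theorem accAnnSub_iff_chainStabilizes : AccAnnSub S N ↔ ChainStabilizes (annihilators S N) := by
  simp only [AccAnnSub, ChainStabilizes, annihilators, Set.mem_range, eq_comm]

end Annihilator

def coeffSet {S : Type*} [Semiring S] (A : Set S) : Set S[X] :=
  {f | ∀ j, f.coeff j ∈ A}

theorem coeffSet_subset_coeffSet_iff {S : Type*} [Semiring S] {A A' : Set S} (h0 : (0 : S) ∈ A) :
    coeffSet A ⊆ coeffSet A' ↔ A ⊆ A' := by
  refine ⟨fun h r hr => ?_, fun h f hf j => h (hf j)⟩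
  have hC : C r ∈ coeffSet A := fun j => by
    rw [coeff_C]
    split_ifs
    exacts [hr, h0]
  simpa using h hC 0

section PolynomialModule

variable {B : Type*} [Ring B] {M : Type*} [AddCommGroup M] [Module Bᵐᵒᵖ M]

theorem rsmul_add (p : ℕ →₀ M) (f g : B[X]) :
    rsmul B M p (f + g) = rsmul B M p f + rsmul B M p g := by
  simp only [rsmul, op_add, add_smul]

theorem rsmul_monomial (p : ℕ →₀ M) (j : ℕ) (b : B) :
    rsmul B M p (monomial j b) = Finsupp.mapDomain Nat.succ^[j] (op b • p) := by
  change eval₂ (Module.toAddMonoidEnd Bᵐᵒᵖ (ℕ →₀ M))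
    (Finsupp.mapDomain.addMonoidHom Nat.succ : AddMonoid.End (ℕ →₀ M))
    (opRingEquiv B (op (monomial j b))) p = _
  rw [opRingEquiv_op_monomial]
  erw [eval₂_monomial, AddMonoid.End.coe_mul, Function.comp_apply, AddMonoid.End.coe_pow,
    Finsupp.mapDomain.addMonoidHom_iterate_apply]
  exact (Finsupp.mapDomain_smul (op b) p).symm

theorem rsmul_eq_sum (p : ℕ →₀ M) (f : B[X]) :
    rsmul B M p f = f.sum fun j b => Finsupp.mapDomain Nat.succ^[j] (op b • p) := by
  induction f using Polynomial.induction_on' with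
  | add f g hf hg =>
    rw [rsmul_add, hf, hg, Polynomial.sum_add_index]
    · simp
    · intro _ _ _; rw [op_add, add_smul, Finsupp.mapDomain_add]
  | monomial n a => simp [rsmul_monomial, Polynomial.sum_monomial_index]

theorem rsmul_eq_zero_of_forall {p : ℕ →₀ M} {f : B[X]}
    (h : ∀ j i, op (f.coeff j) • p i = 0) : rsmul B M p f = 0 := by
  rw [rsmul_eq_sum, Polynomial.sum_def]
  refine Finset.sum_eq_zero fun j _ => ?_
  rw [show op (f.coeff j) • p = 0 from Finsupp.ext (h j), Finsupp.mapDomain_zero]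

theorem rsmul_single_zero_apply (m : M) (f : B[X]) (k : ℕ) :
    rsmul B M (Finsupp.single 0 m) f k = op (f.coeff k) • m := by
  have hterm : ∀ j (b : B), Finsupp.mapDomain Nat.succ^[j] (op b • Finsupp.single 0 m)
      = Finsupp.single j (op b • m) := fun j b => by
    rw [Finsupp.smul_single, Finsupp.mapDomain_single, Nat.succ_iterate, zero_add]
  rw [rsmul_eq_sum, Polynomial.sum_def]
  simp only [hterm, Finsupp.finsetSum_apply, Finsupp.single_apply, Finset.sum_ite_eq']
  split_ifs with hk
  · rfl
  · rw [Polynomial.notMem_support_iff.mp hk, op_zero, zero_smul]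

theorem rsmul_apply_mem {X : Submodule Bᵐᵒᵖ M} {p : ℕ →₀ M} (hp : ∀ i, p i ∈ X)
    (f : B[X]) (k : ℕ) : rsmul B M p f k ∈ X := by
  rw [rsmul_eq_sum, Polynomial.sum_def, Finsupp.finsetSum_apply]
  refine Submodule.sum_mem X fun j _ => ?_
  by_cases hk : k ∈ Set.range Nat.succ^[j]
  · obtain ⟨i, rfl⟩ := hk
    rw [Finsupp.mapDomain_apply (Nat.succ_injective.iterate j), Finsupp.smul_apply]
    exact X.smul_mem _ (hp i)
  · rw [Finsupp.mapDomain_of_notMem_range _ _ hk]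
    exact X.zero_mem

end PolynomialModule

section PolynomialAnnihilator

variable {B : Type*} [Ring B] {M : Type*} [AddCommGroup M] [Module Bᵐᵒᵖ M]

attribute [local instance] polyModOp

theorem op_smul_eq_rsmul (p : ℕ →₀ M) (f : B[X]) : op f • p = rsmul B M p f := rfl

def coeffSubmodule (X : Submodule Bᵐᵒᵖ M) : Submodule B[X]ᵐᵒᵖ (ℕ →₀ M) where
  carrier := {p | ∀ i, p i ∈ X}
  add_mem' hp hq i := X.add_mem (hp i) (hq i)
  zero_mem' _ := X.zero_mem
  smul_mem' f _ hp := rsmul_apply_mem hp f.unop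

def coeffSpan (U : Submodule B[X]ᵐᵒᵖ (ℕ →₀ M)) : Submodule Bᵐᵒᵖ M :=
  Submodule.span Bᵐᵒᵖ {m | ∃ p ∈ U, ∃ i, p i = m}

theorem rAnn_coeffSubmodule (X : Submodule Bᵐᵒᵖ M) :
    rAnn B[X] (coeffSubmodule X : Set (ℕ →₀ M)) = coeffSet (rAnn B (X : Set M)) := by
  ext f
  refine ⟨fun hf j m hm => ?_, fun hf p hp => rsmul_eq_zero_of_forall fun j i => hf j _ (hp i)⟩
  have hsingle : Finsupp.single 0 m ∈ coeffSubmodule X := fun i => by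
    rw [Finsupp.single_apply]
    split_ifs
    exacts [hm, X.zero_mem]
  simpa [op_smul_eq_rsmul, rsmul_single_zero_apply] using
    congrArg (· j) (hf _ hsingle)

theorem rAnn_eq_coeffSet_rAnn_coeffSpan (hqArm : RQuasiArmendariz B M)
    (U : Submodule B[X]ᵐᵒᵖ (ℕ →₀ M)) :
    rAnn B[X] (U : Set (ℕ →₀ M)) = coeffSet (rAnn B (coeffSpan U : Set M)) := by
  ext f
  refine ⟨fun hf j => ?_, fun hf p hp =>
    rsmul_eq_zero_of_forall fun j i => hf j _ (Submodule.subset_span ⟨p, hp, i, rfl⟩)⟩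
  rw [coeffSpan, mem_rAnn_span_iff]
  rintro _ ⟨p, hp, i, rfl⟩ r
  refine hqArm p f (fun h => ?_) i j r
  rw [← op_smul_eq_rsmul, op_mul, mul_smul]
  exact hf _ (U.smul_mem (op h) hp)

theorem image_coeffSet_annihilators (hqArm : RQuasiArmendariz B M) :
    coeffSet '' annihilators B M = annihilators B[X] (ℕ →₀ M) := by
  ext A
  constructor
  · rintro ⟨_, ⟨X, rfl⟩, rfl⟩
    exact ⟨coeffSubmodule X, rAnn_coeffSubmodule X⟩
  · rintro ⟨U, rfl⟩
    exact ⟨_, ⟨coeffSpan U, rfl⟩, (rAnn_eq_coeffSet_rAnn_coeffSpan hqArm U).symm⟩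

end PolynomialAnnihilator

/-- If `M` is a quasi-Armendariz right `B`-module, then `M` satisfies the ascending chain
condition on annihilators of submodules if and only if `M[x]` does so over `B[x]`. -/
theorem stmt17 {B : Type*} [Ring B] {M : Type*} [AddCommGroup M] [Module Bᵐᵒᵖ M]
    (hqArm : RQuasiArmendariz B M) :
    letI := polyModOp B M
    (AccAnnSub B M ↔ AccAnnSub (Polynomial B) (ℕ →₀ M)) := by
  rw [accAnnSub_iff_chainStabilizes, accAnnSub_iff_chainStabilizes]
  refine chainStabilizes_iff_of_image_eq coeffSet ?_ (image_coeffSet_annihilators hqArm)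
  rintro _ ⟨X, rfl⟩ _ _
  exact coeffSet_subset_coeffSet_iff (zero_mem_rAnn _)
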